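/- For every positive integer n, every real α with 0 < α ≤ 1/n and every real x ≥ 0: U_n^[α](t³; x) = (6 + 18nx + 9n²x(x+α) + n³x(x² + 3xα + 2α²))/n³ and U_n^[α](t⁴; x) = (24 + 96nx + 72n²x(x+α) + 16n³x(x² + 3xα + 2α²) + n⁴x(x³ + 6x²α + 11xα² + 6α³))/n⁴. -/

import Mathlib

/-!
Write `c = 1 + nα` and `z = n / c`, so that `(α + 1/n)^(-i) = z^i` and `1 - αz = c⁻¹`.
The Gamma integral gives `∫ e^(-nu) (nu)^i/i! u^m du = (i+m)! / (i! n^(m+1))`, and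
Vandermonde's identity writes `(i+m)!/i! = m! Σ_k C(m,k) C(i,k)`.
Since `x^(k+j,-α) = x^(k,-α) (x+kα)^(j,-α)`, the series `Σ_i x^(i,-α)/i! C(i,k) z^i` is
`z^k x^(k,-α)/k!` times the binomial series `Σ_j (x+kα)^(j,-α)/j! z^j = (1-αz)^(-(x+kα)/α)`,
which equals `c^(x/α) c^k` and so cancels the normalisation `c^(-x/α)`. Hence
`U_n^[α](t^m; x) = m!/n^m Σ_k C(m,k) n^k x^(k,-α)/k!`, and `m = 3, 4` are instances.
-/

open MeasureTheory Filter

noncomputable section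

/-- The Szász basis function `e^(-nu) (nu)^i / i!`. -/
def szaszBasis (n i : ℕ) (u : ℝ) : ℝ :=
  Real.exp (-(n : ℝ) * u) * ((n : ℝ) * u) ^ i / (Nat.factorial i : ℝ)

/-- The rising factorial `x^(i,-α) = ∏_{j=0}^{i-1} (x + jα)` with increment `α`. -/
def risingFac (x α : ℝ) (i : ℕ) : ℝ :=
  ∏ j ∈ Finset.range i, (x + (j : ℝ) * α)

/-- The Durrmeyer modification of the generalized Szász-Mirakjan operators:
`U_n^[α](f; x) = n Σ_i (1+nα)^(−x/α) (α+1/n)^(−i) x^(i,−α)/i! ∫_0^∞ e^(−nu)(nu)^i/i! f(u) du`. -/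
def U (n : ℕ) (α : ℝ) (f : ℝ → ℝ) (x : ℝ) : ℝ :=
  (n : ℝ) * ∑' i : ℕ,
    (1 + (n : ℝ) * α) ^ (-x / α) * (α + 1 / (n : ℝ)) ^ (-(i : ℤ)) *
      (risingFac x α i / (Nat.factorial i : ℝ)) *
      ∫ u in Set.Ioi (0 : ℝ), szaszBasis n i u * f u

/-- The `m`-th central moment `Θ_{n,m}^[α](x) = U_n^[α]((t−x)^m; x)`. -/
def theta (n : ℕ) (α : ℝ) (m : ℕ) (x : ℝ) : ℝ :=
  U n α (fun t => (t - x) ^ m) x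

end

open Nat Finset

theorem risingFac_succ (x α : ℝ) (i : ℕ) :
    risingFac x α (i + 1) = risingFac x α i * (x + i * α) :=
  prod_range_succ _ _

theorem risingFac_add (x α : ℝ) (k j : ℕ) :
    risingFac x α (k + j) = risingFac x α k * risingFac (x + k * α) α j := by
  rw [risingFac, risingFac, risingFac, prod_range_add]
  congr 1
  refine prod_congr rfl fun i _ => ?_
  push_cast
  ring

theorem risingFac_eq_pow_mul_ascPochhammer_eval {α : ℝ} (hα : α ≠ 0) (x : ℝ) (i : ℕ) :
    risingFac x α i = α ^ i * (ascPochhammer ℝ i).eval (x / α) := by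
  induction i with
  | zero => simp [risingFac]
  | succ i ih =>
    rw [risingFac_succ, ih, ascPochhammer_succ_eval]
    field_simp
    ring

theorem ringChoose_mul_pow_eq_risingFac_mul_pow {α : ℝ} (hα : α ≠ 0) (x z : ℝ) (i : ℕ) :
    Ring.choose (x / α + i - 1) i * (α * z) ^ i = risingFac x α i / i ! * z ^ i := by
  rw [← Ring.multichoose_eq, risingFac_eq_pow_mul_ascPochhammer_eval hα,
    ← Polynomial.ascPochhammer_smeval_eq_eval,
    ← Ring.factorial_nsmul_multichoose_eq_ascPochhammer, nsmul_eq_mul]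
  field_simp
  ring

theorem hasSum_risingFac_div_factorial_mul_pow {α z : ℝ} (hα : α ≠ 0) (hz : |α * z| < 1)
    (x : ℝ) :
    HasSum (fun i : ℕ => risingFac x α i / i ! * z ^ i) ((1 - α * z) ^ (-x / α)) := by
  have h := (Real.one_div_one_sub_rpow_hasFPowerSeriesOnBall_zero (x / α)).hasSum
    (y := α * z) (by rw [← ENNReal.coe_one, Metric.eball_coe]; simpa using hz)
  simp only [FormalMultilinearSeries.ofScalars_apply_eq, smul_eq_mul, zero_add] at h
  have hpos : 0 < 1 - α * z := by linarith [le_abs_self (α * z)]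
  rw [neg_div, Real.rpow_neg hpos.le, ← one_div]
  simpa only [ringChoose_mul_pow_eq_risingFac_mul_pow hα] using h

theorem hasSum_risingFac_div_factorial_mul_choose_mul_pow {α z : ℝ} (hα : α ≠ 0)
    (hz : |α * z| < 1) (x : ℝ) (k : ℕ) :
    HasSum (fun i : ℕ => risingFac x α i / i ! * i.choose k * z ^ i)
      (risingFac x α k / k ! * z ^ k * (1 - α * z) ^ (-(x + k * α) / α)) := by
  have hshift := (hasSum_risingFac_div_factorial_mul_pow hα hz (x + k * α)).mul_left
    (risingFac x α k / k ! * z ^ k)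
  rw [← hasSum_nat_add_iff' k]
  have hlow : ∑ i ∈ range k, risingFac x α i / i ! * i.choose k * z ^ i = 0 :=
    sum_eq_zero fun i hi => by rw [choose_eq_zero_of_lt (mem_range.mp hi)]; simp
  rw [hlow, sub_zero]
  refine hshift.congr_fun fun j => ?_
  have hfac : ((j + k).choose k : ℝ) * j ! * k ! = (j + k)! := by
    exact_mod_cast add_choose_mul_factorial_mul_factorial j k
  have hchoose : ((k + j).choose k : ℝ) ≠ 0 := by
    exact_mod_cast (choose_pos (le_add_right k j)).ne'
  rw [← hfac, add_comm j k, risingFac_add, pow_add]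
  field_simp

theorem integral_pow_mul_exp_neg_mul_Ioi {r : ℝ} (hr : 0 < r) (p : ℕ) :
    ∫ t in Set.Ioi (0 : ℝ), t ^ p * Real.exp (-(r * t)) = p ! / r ^ (p + 1) := by
  have h := Real.integral_rpow_mul_exp_neg_mul_Ioi (a := p + 1) (by positivity) hr
  rw [add_sub_cancel_right, Real.Gamma_nat_eq_factorial] at h
  norm_cast at h
  rw [h, one_div_pow, one_div_mul_eq_div]

theorem integral_szaszBasis_mul_pow {n : ℕ} (hn : 0 < n) (i m : ℕ) :
    ∫ u in Set.Ioi (0 : ℝ), szaszBasis n i u * u ^ m =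
      (i + m)! / (i ! * (n : ℝ) ^ (m + 1)) := by
  have hn' : (0 : ℝ) < n := by exact_mod_cast hn
  have hintegrand : ∀ u, szaszBasis n i u * u ^ m
      = (n : ℝ) ^ i / i ! * (u ^ (i + m) * Real.exp (-(n * u))) := fun u => by
    rw [szaszBasis, mul_pow, pow_add]
    ring_nf
  simp_rw [hintegrand]
  rw [integral_const_mul, integral_pow_mul_exp_neg_mul_Ioi hn',
    show i + m + 1 = i + (m + 1) by ring, pow_add]
  field_simp

theorem factorial_add_eq_mul_sum_choose_mul_choose (i m : ℕ) :
    (i + m)! = i ! * m ! * ∑ k ∈ range (m + 1), m.choose k * i.choose k := by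
  rw [← add_choose_mul_factorial_mul_factorial, add_choose_eq,
    Finset.Nat.sum_antidiagonal_eq_sum_range_succ fun a b => i.choose a * m.choose b]
  rw [mul_assoc, mul_comm _ (i ! * m !)]
  congr 1
  refine sum_congr rfl fun k hk => ?_
  rw [choose_symm (mem_range_succ_iff.mp hk), mul_comm]

theorem U_summand_pow_eq {n : ℕ} (hn : 0 < n) (α x : ℝ) (m i : ℕ) :
    (1 + n * α) ^ (-x / α) * (α + 1 / n) ^ (-(i : ℤ)) * (risingFac x α i / i !) *
        ∫ u in Set.Ioi (0 : ℝ), szaszBasis n i u * u ^ m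
      = (1 + n * α) ^ (-x / α) * m ! / n ^ (m + 1) *
        ∑ k ∈ range (m + 1),
          m.choose k * (risingFac x α i / i ! * i.choose k * (n / (1 + n * α)) ^ i) := by
  have hn' : (0 : ℝ) < n := by exact_mod_cast hn
  have hpow : (α + 1 / n) ^ (-(i : ℤ)) = (n / (1 + n * α)) ^ i := by
    rw [zpow_neg, zpow_natCast, ← inv_pow]
    field_simp
    ring
  have hfac :
      ((i + m)! : ℝ) = i ! * m ! * ∑ k ∈ range (m + 1), (m.choose k * i.choose k : ℝ) := by
    exact_mod_cast factorial_add_eq_mul_sum_choose_mul_choose i m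
  rw [hpow, integral_szaszBasis_mul_pow hn, hfac, mul_sum, sum_div, mul_sum, mul_sum]
  refine sum_congr rfl fun k _ => ?_
  field_simp

theorem U_pow_eq_sum {n : ℕ} (hn : 0 < n) {α : ℝ} (hα : 0 < α) (x : ℝ) (m : ℕ) :
    U n α (fun t => t ^ m) x =
      m ! / n ^ m * ∑ k ∈ range (m + 1), m.choose k * (risingFac x α k / k ! * n ^ k) := by
  set c : ℝ := 1 + n * α with hc_def
  have hc1 : 1 < c := lt_add_of_pos_right 1 (mul_pos (by exact_mod_cast hn) hα)
  have hc : 0 < c := zero_lt_one.trans hc1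
  set z : ℝ := n / c with hz_def
  have hαz : α * z = 1 - c⁻¹ := by rw [hz_def, hc_def]; field_simp; ring
  have hαz_abs : |α * z| < 1 := by
    rw [hαz, abs_sub_lt_iff]
    constructor <;> linarith [inv_pos.mpr hc, inv_lt_one_of_one_lt₀ hc1]
  have hcollapse :
      ∀ k : ℕ, c ^ (-x / α) * (z ^ k * (1 - α * z) ^ (-(x + k * α) / α)) = n ^ k := by
    intro k
    rw [hαz, sub_sub_cancel, Real.inv_rpow hc.le, ← Real.rpow_neg hc.le,
      show -(-(x + k * α) / α) = x / α + k by field_simp, Real.rpow_add hc, Real.rpow_natCast]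
    have hcancel : c ^ (-x / α) * c ^ (x / α) = 1 := by
      rw [← Real.rpow_add hc, neg_div, neg_add_cancel, Real.rpow_zero]
    calc c ^ (-x / α) * (z ^ k * (c ^ (x / α) * c ^ k))
        = (c ^ (-x / α) * c ^ (x / α)) * (z * c) ^ k := by rw [mul_pow]; ring
      _ = n ^ k := by rw [hcancel, hz_def, div_mul_cancel₀ _ hc.ne', one_mul]
  have hsum := (hasSum_sum (s := range (m + 1)) fun k _ =>
    (hasSum_risingFac_div_factorial_mul_choose_mul_pow hα.ne' hαz_abs x k).mul_left
      (m.choose k : ℝ)).mul_left (c ^ (-x / α) * m ! / n ^ (m + 1))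
  rw [U, tsum_congr (U_summand_pow_eq hn α x m), hsum.tsum_eq, mul_sum, mul_sum, mul_sum]
  refine sum_congr rfl fun k _ => ?_
  rw [← hcollapse k, pow_succ]
  field_simp

theorem stmt3_general (n : ℕ) (hn : 0 < n) (α : ℝ) (hα : 0 < α)
    (x : ℝ) :
    U n α (fun t => t ^ 3) x =
      (6 + 18 * n * x + 9 * n ^ 2 * x * (x + α) +
        n ^ 3 * x * (x ^ 2 + 3 * x * α + 2 * α ^ 2)) / (n : ℝ) ^ 3 ∧
    U n α (fun t => t ^ 4) x =
      (24 + 96 * n * x + 72 * n ^ 2 * x * (x + α) +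
        16 * n ^ 3 * x * (x ^ 2 + 3 * x * α + 2 * α ^ 2) +
        n ^ 4 * x * (x ^ 3 + 6 * x ^ 2 * α + 11 * x * α ^ 2 + 6 * α ^ 3)) / (n : ℝ) ^ 4 := by
  rw [U_pow_eq_sum hn hα, U_pow_eq_sum hn hα]
  simp only [sum_range_succ, sum_range_zero, risingFac, prod_range_succ, prod_range_zero]
  norm_num [choose_succ_succ, factorial]
  constructor <;> ring

theorem stmt3 (n : ℕ) (hn : 0 < n) (α : ℝ) (hα : 0 < α) (hαn : α ≤ 1 / n)
    (x : ℝ) (hx : 0 ≤ x) :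
    U n α (fun t => t ^ 3) x =
      (6 + 18 * n * x + 9 * n ^ 2 * x * (x + α) +
        n ^ 3 * x * (x ^ 2 + 3 * x * α + 2 * α ^ 2)) / (n : ℝ) ^ 3 ∧
    U n α (fun t => t ^ 4) x =
      (24 + 96 * n * x + 72 * n ^ 2 * x * (x + α) +
        16 * n ^ 3 * x * (x ^ 2 + 3 * x * α + 2 * α ^ 2) +
        n ^ 4 * x * (x ^ 3 + 6 * x ^ 2 * α + 11 * x * α ^ 2 + 6 * α ^ 3)) / (n : ℝ) ^ 4 :=
  stmt3_general n hn α hα x
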